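/- For any factorial, the Robbins bounds hold: √(2πN) (N/e)^N e^{1/(12N+1)} ≤ N! ≤ √(2πN) (N/e)^N e^{1/(12N)} for all positive integers N. -/

import Mathlib

/-!
With `s n = n! / (√(2n) (n/e)^n)`, Stirling's formula says `s n → √π`. The series
`log s n - log s (n+1) = ∑_{k ≥ 1} x^(2k) / (2k+1)`, `x = 1/(2n+1)`, lies between the geometric
series of ratios `x²/3` and `x²`, which gives the telescoping bounds
`1/(12n+1) - 1/(12(n+1)+1) ≤ log s n - log s (n+1) ≤ 1/(12n) - 1/(12(n+1))`.
Hence `log s n - 1/(12n)` increases and `log s n - 1/(12n+1)` decreases, both to `log √π`.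
-/

open Real Filter Stirling
open scoped Topology

section

variable {α : Type*} [AddCommGroup α] [LinearOrder α] [IsOrderedAddMonoid α] [TopologicalSpace α]
  [OrderClosedTopology α] [IsTopologicalAddGroup α] {u g : ℕ → α} {L : α}

theorem le_add_of_tendsto_of_sub_succ_le (hu : Tendsto u atTop (𝓝 L)) (hg : Tendsto g atTop (𝓝 0))
    (h : ∀ n, u n - u (n + 1) ≤ g n - g (n + 1)) (n : ℕ) : u n ≤ L + g n := by
  have hmono : Monotone fun n => u n - g n :=
    monotone_nat_of_le_succ fun n => sub_nonneg.1 <| by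
      convert sub_nonneg.2 (h n) using 1; abel
  have := hmono.ge_of_tendsto (by simpa using hu.sub hg) n
  rwa [sub_le_iff_le_add] at this

theorem add_le_of_tendsto_of_le_sub_succ (hu : Tendsto u atTop (𝓝 L)) (hg : Tendsto g atTop (𝓝 0))
    (h : ∀ n, g n - g (n + 1) ≤ u n - u (n + 1)) (n : ℕ) : L + g n ≤ u n := by
  have := le_add_of_tendsto_of_sub_succ_le (u := fun n => -u n) (g := fun n => -g n) hu.neg
    (by simpa using hg.neg) (fun n => by simpa only [neg_sub, neg_sub_neg] using neg_le_neg (h n)) n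
  rwa [← neg_add, neg_le_neg_iff] at this

end

theorem tendsto_one_div_twelve_mul_add (c : ℝ) :
    Tendsto (fun n : ℕ => 1 / (12 * ((n : ℝ) + 1) + c)) atTop (𝓝 0) :=
  tendsto_const_nhds.div_atTop <| tendsto_atTop_add_const_right _ c <|
    (tendsto_atTop_add_const_right _ 1 tendsto_natCast_atTop_atTop).const_mul_atTop (by norm_num)

theorem le_log_stirlingSeq_sdiff {n : ℕ} (hn : n ≠ 0) :
    1 / (12 * n + 1) - 1 / (12 * (n + 1) + 1) ≤ log (stirlingSeq n) - log (stirlingSeq (n + 1)) := by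
  obtain ⟨n, rfl⟩ := Nat.exists_eq_succ_of_ne_zero hn
  set N : ℝ := ↑(n + 1) with hN
  have hN1 : 1 ≤ N := by simp [hN]
  set r : ℝ := (1 / (2 * N + 1)) ^ 2 / 3 with hr
  have hr1 : r < 1 := by
    rw [hr, div_lt_one (by norm_num), div_pow, one_pow, div_lt_iff₀ (by positivity)]; nlinarith
  have hgeo : HasSum (fun k : ℕ => r ^ (k + 1)) (r / (1 - r)) := by
    have := (hasSum_geometric_of_lt_one (by positivity) hr1).mul_left r
    simpa only [← pow_succ', ← div_eq_mul_inv] using this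
  have hterm (k : ℕ) : r ^ (k + 1) ≤ 1 / (2 * ↑(k + 1) + 1) * ((1 / (2 * N + 1)) ^ 2) ^ (k + 1) := by
    have hbernoulli : 2 * ((k + 1 : ℕ) : ℝ) + 1 ≤ 3 ^ (k + 1) := by
      have := one_add_mul_le_pow (by norm_num : (-2 : ℝ) ≤ 2) (k + 1)
      norm_num at this ⊢; linarith
    rw [hr, div_pow, div_eq_mul_one_div, mul_comm]
    gcongr
  have hsum : r / (1 - r) = 1 / (12 * N ^ 2 + 12 * N + 2) := by
    rw [div_eq_div_iff (by linarith) (by positivity), hr]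
    field_simp
    ring
  calc _ ≤ 1 / (12 * N ^ 2 + 12 * N + 2) := by
        rw [div_sub_div _ _ (by positivity) (by positivity), div_le_div_iff₀ (by positivity)
          (by positivity)]
        nlinarith
    _ = r / (1 - r) := hsum.symm
    _ ≤ _ := hasSum_le hterm hgeo (log_stirlingSeq_sdiff_hasSum n)

theorem tendsto_log_stirlingSeq_succ :
    Tendsto (fun n : ℕ => log (stirlingSeq (n + 1))) atTop (𝓝 (log √π)) :=
  (tendsto_stirlingSeq_sqrt_pi.comp (tendsto_add_atTop_nat 1)).log (by positivity)

theorem stirlingSeq_le_sqrt_pi_mul_exp {n : ℕ} (hn : n ≠ 0) :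
    stirlingSeq n ≤ √π * exp (1 / (12 * n)) := by
  obtain ⟨n, rfl⟩ := Nat.exists_eq_succ_of_ne_zero hn
  have hstep (m : ℕ) : log (stirlingSeq (m + 1)) - log (stirlingSeq (m + 1 + 1)) ≤
      1 / (12 * ((m : ℝ) + 1)) - 1 / (12 * (((m + 1 : ℕ) : ℝ) + 1)) :=
    (log_stirlingSeq_sdiff_le (m + 1)).trans_eq (by push_cast; field_simp; ring)
  have key := le_add_of_tendsto_of_sub_succ_le tendsto_log_stirlingSeq_succ
    (by simpa using tendsto_one_div_twelve_mul_add 0) hstep n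
  rw [← exp_le_exp, exp_log (stirlingSeq'_pos n), exp_add, exp_log (by positivity)] at key
  simpa using key

theorem sqrt_pi_mul_exp_le_stirlingSeq {n : ℕ} (hn : n ≠ 0) :
    √π * exp (1 / (12 * n + 1)) ≤ stirlingSeq n := by
  obtain ⟨n, rfl⟩ := Nat.exists_eq_succ_of_ne_zero hn
  have hstep (m : ℕ) : 1 / (12 * ((m : ℝ) + 1) + 1) - 1 / (12 * (((m + 1 : ℕ) : ℝ) + 1) + 1) ≤
      log (stirlingSeq (m + 1)) - log (stirlingSeq (m + 1 + 1)) := by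
    simpa using le_log_stirlingSeq_sdiff m.succ_ne_zero
  have key := add_le_of_tendsto_of_le_sub_succ tendsto_log_stirlingSeq_succ
    (tendsto_one_div_twelve_mul_add 1) hstep n
  rw [← exp_le_exp, exp_log (stirlingSeq'_pos n), exp_add, exp_log (by positivity)] at key
  simpa using key

theorem factorial_eq_mul_stirlingSeq {n : ℕ} (hn : n ≠ 0) :
    (n.factorial : ℝ) = √(2 * n) * (n / exp 1) ^ n * stirlingSeq n := by
  rw [stirlingSeq, mul_div_cancel₀]
  positivity

/-- Robbins' bounds for the factorial:
`√(2πN) (N/e)^N e^{1/(12N+1)} ≤ N! ≤ √(2πN) (N/e)^N e^{1/(12N)}`. -/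
theorem robbins_factorial_bounds (N : ℕ) (hN : 1 ≤ N) :
    Real.sqrt (2 * Real.pi * N) * ((N : ℝ) / Real.exp 1) ^ N *
        Real.exp (1 / (12 * (N : ℝ) + 1)) ≤ (N.factorial : ℝ) ∧
    (N.factorial : ℝ) ≤ Real.sqrt (2 * Real.pi * N) * ((N : ℝ) / Real.exp 1) ^ N *
        Real.exp (1 / (12 * (N : ℝ))) := by
  have hN0 : N ≠ 0 := Nat.one_le_iff_ne_zero.mp hN
  have hP : √(2 * π * N) * (N / exp 1) ^ N = √(2 * N) * (N / exp 1) ^ N * √π := by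
    rw [show 2 * π * N = 2 * N * π by ring, sqrt_mul (by positivity)]; ring
  rw [hP, factorial_eq_mul_stirlingSeq hN0, mul_assoc _ √π, mul_assoc _ √π]
  exact ⟨by gcongr; exact sqrt_pi_mul_exp_le_stirlingSeq hN0,
    by gcongr; exact stirlingSeq_le_sqrt_pi_mul_exp hN0⟩
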